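/- arXiv:1808.07693 — 5 statements merged into one kernel-verified Lean document; each statement's English description precedes it below -/
import Mathlib

section
/- For every n ∈ ℕ and every partition p ∈ P(k,l), the adjoint of the linear map T̂_p^(n) : (ℂ^n)^{⊗k} → (ℂ^n)^{⊗l} with respect to the standard Hermitian inner products equals T̂_{p*}^(n), where p* ∈ P(l,k) is the involution of p: (T̂_p^(n))* = T̂_{p*}^(n). -/
attribute [local instance] Classical.propDecidable

noncomputable section

namespace GTQG

/-! ## Partitions -/

/-- The set `P(k,l)` of partitions of `{1,…,k,1',…,l'}`, encoded as equivalence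
relations (i.e. set partitions) on the disjoint union `Fin k ⊕ Fin l`. -/
abbrev Part (k l : ℕ) : Type := Setoid (Fin k ⊕ Fin l)

/-- `ker(i,j)`: the partition whose blocks are the fibers of the labelling
`x ↦ i x` on upper points and `y ↦ j y` on lower points. -/
def kerPartA {α : Type*} {k l : ℕ} (i : Fin k → α) (j : Fin l → α) : Part k l :=
  Setoid.ker (Sum.elim i j)

/-- `ker(i,j)` for `ℕ`-valued multi-indices. -/
abbrev kerPart {k l : ℕ} (i : Fin k → ℕ) (j : Fin l → ℕ) : Part k l := kerPartA i j

/-- `ker(i) = ker(i,∅) ∈ P(k,0)`. -/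
def kerPart0 {k : ℕ} (i : Fin k → ℕ) : Part k 0 := kerPartA i Fin.elim0

/-- The pair partition `⊔ ∈ P(0,2)`. -/
def pairPart : Part 0 2 := kerPartA Fin.elim0 (fun _ => (1 : ℕ))

/-- The identity partition `| ∈ P(1,1)`. -/
def idPart : Part 1 1 := kerPartA (fun _ => (1 : ℕ)) (fun _ => (1 : ℕ))

/-- The partition `p̂ = ker((1,1,2),(2,1,1)) ∈ P(3,3)`. -/
def pHat : Part 3 3 := kerPart ![1, 1, 2] ![2, 1, 1]

/-- The involution `p* ∈ P(l,k)`, turning `p` upside-down. -/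
def invol {k l : ℕ} (p : Part k l) : Part l k := Setoid.comap Sum.swap p

/-- The number of blocks of a partition. -/
def blockCount {k l : ℕ} (p : Part k l) : ℕ := Nat.card (Quotient p)

/-- The restriction of `p` to its upper row. -/
def upperSetoid {k l : ℕ} (p : Part k l) : Setoid (Fin k) := Setoid.comap Sum.inl p

/-- The restriction of `p` to its lower row. -/
def lowerSetoid {k l : ℕ} (p : Part k l) : Setoid (Fin l) := Setoid.comap Sum.inr p

/-- `p ∈ P(k,l)` and `q ∈ P(l,l')` are compatible if the lower row of `p`
and the upper row of `q` have the same block structure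
(i.e. `j^(p) ∈ S_∞(i^(q))`). -/
def Compatible {k l l' : ℕ} (p : Part k l) (q : Part l l') : Prop :=
  lowerSetoid p = upperSetoid q

section Comp

variable {k l l' : ℕ}

/-- The points of the vertical concatenation of `p ∈ P(k,l)` and `q ∈ P(l,l')`:
`k` upper points, `l` middle points, `l'` lower points. -/
abbrev CompCarrier (k l l' : ℕ) : Type := Fin k ⊕ (Fin l ⊕ Fin l')

/-- Inclusion of the points of `p` into the vertical concatenation. -/
def topIncl : Fin k ⊕ Fin l → CompCarrier k l l' := Sum.map id Sum.inl

/-- Inclusion of the points of `q` into the vertical concatenation. -/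
def botIncl : Fin l ⊕ Fin l' → CompCarrier k l l' := Sum.inr

/-- Two points of the vertical concatenation are directly connected if they are
connected by a string of `p` or by a string of `q`. -/
def compRel (p : Part k l) (q : Part l l') :
    CompCarrier k l l' → CompCarrier k l l' → Prop := fun x y =>
  (∃ u v, p u v ∧ x = topIncl u ∧ y = topIncl v) ∨
  (∃ u v, q u v ∧ x = botIncl u ∧ y = botIncl v)

/-- The partition of all points of the vertical concatenation of `p` and `q`
into connected components. -/
def middleJoin (p : Part k l) (q : Part l l') : Setoid (CompCarrier k l l') :=
  Relation.EqvGen.setoid (compRel p q)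

/-- The composition `qp ∈ P(k,l')`: vertical concatenation with all loops removed. -/
def compPart (p : Part k l) (q : Part l l') : Part k l' :=
  Setoid.comap (Sum.map id Sum.inr) (middleJoin p q)

/-- A point of the vertical concatenation is a middle point. -/
def IsMiddle (x : CompCarrier k l l') : Prop := ∃ m : Fin l, x = Sum.inr (Sum.inl m)

/-- The number `l(q,p)` of loops in the vertical concatenation of `p` and `q`:
connected components consisting entirely of middle points. -/
def loopCount (p : Part k l) (q : Part l l') : ℕ :=
  Nat.card {c : Quotient (middleJoin p q) //
    ∀ x : CompCarrier k l l', Quotient.mk (middleJoin p q) x = c → IsMiddle x}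

end Comp

/-- The direct sum of two set partitions. -/
def sumSetoid {α β : Type*} (p : Setoid α) (q : Setoid β) : Setoid (α ⊕ β) :=
  Setoid.ker (Sum.map (Quotient.mk p) (Quotient.mk q))

/-- The tensor product `p ⊗ q ∈ P(k+k',l+l')`: horizontal concatenation. -/
def tensorPart {k l k' l' : ℕ} (p : Part k l) (q : Part k' l') : Part (k + k') (l + l') :=
  Setoid.comap
    (Sum.elim
      (fun z => Fin.addCases (fun a => Sum.inl (Sum.inl a)) (fun b => Sum.inr (Sum.inl b)) z)
      (fun z => Fin.addCases (fun a => Sum.inl (Sum.inr a)) (fun b => Sum.inr (Sum.inr b)) z))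
    (sumSetoid p q)

/-! ## Rotations -/

/-- Rotating the outermost left upper leg to the lower row (reindexing map). -/
def rotULDmap (k l : ℕ) : Fin k ⊕ Fin (l + 1) → Fin (k + 1) ⊕ Fin l
  | .inl x => .inl x.succ
  | .inr y => Fin.cases (Sum.inl 0) (fun i => Sum.inr i) y

/-- Rotating the outermost left upper leg to the lower row. -/
def rotULD {k l : ℕ} (p : Part (k + 1) l) : Part k (l + 1) :=
  Setoid.comap (rotULDmap k l) p

/-- Rotating the outermost left lower leg to the upper row (reindexing map). -/
def rotDLUmap (k l : ℕ) : Fin (k + 1) ⊕ Fin l → Fin k ⊕ Fin (l + 1)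
  | .inl x => Fin.cases (Sum.inr 0) (fun i => Sum.inl i) x
  | .inr y => .inr y.succ

/-- Rotating the outermost left lower leg to the upper row. -/
def rotDLU {k l : ℕ} (p : Part k (l + 1)) : Part (k + 1) l :=
  Setoid.comap (rotDLUmap k l) p

/-- Rotating the outermost right upper leg to the lower row (reindexing map). -/
def rotURDmap (k l : ℕ) : Fin k ⊕ Fin (l + 1) → Fin (k + 1) ⊕ Fin l
  | .inl x => .inl x.castSucc
  | .inr y => Fin.lastCases (Sum.inl (Fin.last k)) (fun i => Sum.inr i) y

/-- Rotating the outermost right upper leg to the lower row. -/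
def rotURD {k l : ℕ} (p : Part (k + 1) l) : Part k (l + 1) :=
  Setoid.comap (rotURDmap k l) p

/-- Rotating the outermost right lower leg to the upper row (reindexing map). -/
def rotDRUmap (k l : ℕ) : Fin (k + 1) ⊕ Fin l → Fin k ⊕ Fin (l + 1)
  | .inl x => Fin.lastCases (Sum.inr (Fin.last l)) (fun i => Sum.inl i) x
  | .inr y => .inr y.castSucc

/-- Rotating the outermost right lower leg to the upper row. -/
def rotDRU {k l : ℕ} (p : Part k (l + 1)) : Part (k + 1) l :=
  Setoid.comap (rotDRUmap k l) p

/-- One basic rotation step between partitions (with varying numbers of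
upper and lower points). -/
inductive BasicRot : (Σ k l : ℕ, Part k l) → (Σ k l : ℕ, Part k l) → Prop
  | uld {k l : ℕ} (p : Part (k + 1) l) : BasicRot ⟨k + 1, l, p⟩ ⟨k, l + 1, rotULD p⟩
  | dlu {k l : ℕ} (p : Part k (l + 1)) : BasicRot ⟨k, l + 1, p⟩ ⟨k + 1, l, rotDLU p⟩
  | urd {k l : ℕ} (p : Part (k + 1) l) : BasicRot ⟨k + 1, l, p⟩ ⟨k, l + 1, rotURD p⟩
  | dru {k l : ℕ} (p : Part k (l + 1)) : BasicRot ⟨k, l + 1, p⟩ ⟨k + 1, l, rotDRU p⟩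

/-- `IsRotationOf q p`: `q` is obtained from `p` by finitely many basic rotations. -/
def IsRotationOf (q p : Σ k l : ℕ, Part k l) : Prop := Relation.ReflTransGen BasicRot p q

/-- A family `R ⊆ P` is closed under rotation. -/
def RotationClosed (R : ∀ k l : ℕ, Set (Part k l)) : Prop :=
  ∀ {k l k' l' : ℕ} (p : Part k l) (q : Part k' l'),
    p ∈ R k l → IsRotationOf ⟨k', l', q⟩ ⟨k, l, p⟩ → q ∈ R k' l'

/-! ## (Skew) categories of partitions -/

/-- A skew category of partitions: a collection `R ⊆ P` containing `⊔` and `|`,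
closed under involution, connected tensor products and conditioned composition. -/
structure IsSkewCategory (R : ∀ k l : ℕ, Set (Part k l)) : Prop where
  pair_mem : pairPart ∈ R 0 2
  id_mem : idPart ∈ R 1 1
  invol_mem : ∀ {k l : ℕ} {p : Part k l}, p ∈ R k l → invol p ∈ R l k
  conn_tensor_mem : ∀ {k l k' l' : ℕ} {p : Part k l} {q : Part k' l'}
      (i : Fin k → ℕ) (j : Fin l → ℕ) (f : Fin k' → ℕ) (g : Fin l' → ℕ),
      p ∈ R k l → q ∈ R k' l' → kerPart i j = p → kerPart f g = q →
      kerPart (Fin.append i f) (Fin.append j g) ∈ R (k + k') (l + l')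
  cond_comp_mem : ∀ {k l l' : ℕ} {p : Part k l} {q : Part l l'},
      p ∈ R k l → q ∈ R l l' → Compatible p q → compPart p q ∈ R k l'

/-- A category of partitions: a collection `C ⊆ P` containing `⊔` and `|`,
closed under involution, tensor products and composition. -/
structure IsCategoryOfPartitions (C : ∀ k l : ℕ, Set (Part k l)) : Prop where
  pair_mem : pairPart ∈ C 0 2
  id_mem : idPart ∈ C 1 1
  invol_mem : ∀ {k l : ℕ} {p : Part k l}, p ∈ C k l → invol p ∈ C l k
  tensor_mem : ∀ {k l k' l' : ℕ} {p : Part k l} {q : Part k' l'},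
      p ∈ C k l → q ∈ C k' l' → tensorPart p q ∈ C (k + k') (l + l')
  comp_mem : ∀ {k l l' : ℕ} {p : Part k l} {q : Part l l'},
      p ∈ C k l → q ∈ C l l' → compPart p q ∈ C k l'

/-- The skew category of partitions generated by a family `E`. -/
def skewGenerated (E : ∀ k l : ℕ, Set (Part k l)) : ∀ k l : ℕ, Set (Part k l) :=
  fun k l => { p | ∀ R : ∀ k l : ℕ, Set (Part k l),
    IsSkewCategory R → (∀ k' l' : ℕ, E k' l' ⊆ R k' l') → p ∈ R k l }

/-- The category of partitions generated by a family `E`. -/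
def catGenerated (E : ∀ k l : ℕ, Set (Part k l)) : ∀ k l : ℕ, Set (Part k l) :=
  fun k l => { p | ∀ C : ∀ k l : ℕ, Set (Part k l),
    IsCategoryOfPartitions C → (∀ k' l' : ℕ, E k' l' ⊆ C k' l') → p ∈ C k l }

end GTQG
namespace GTQG

/-! ## The free products `ℤ₂^{*∞}` and `ℤ₂^{*n}` -/

/-- The cyclic group of order two (written multiplicatively). -/
abbrev Z2 : Type := Multiplicative (ZMod 2)

/-- `ℤ₂^{*∞}`, the free product of countably many copies of `ℤ₂`. -/
abbrev FreeZ2 : Type := Monoid.CoprodI (fun _ : ℕ => Z2)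

/-- `ℤ₂^{*n}`, the free product of `n` copies of `ℤ₂`. -/
abbrev FreeZ2n (n : ℕ) : Type := Monoid.CoprodI (fun _ : Fin n => Z2)

/-- The generator `a_i` of `ℤ₂^{*∞}`. -/
def gen (i : ℕ) : FreeZ2 := Monoid.CoprodI.of (i := i) (Multiplicative.ofAdd (1 : ZMod 2))

/-- The generator `a_i` of `ℤ₂^{*n}`. -/
def genn {n : ℕ} (i : Fin n) : FreeZ2n n :=
  Monoid.CoprodI.of (i := i) (Multiplicative.ofAdd (1 : ZMod 2))

/-- The word `a_i = a_{i₁} ⋯ a_{i_k} ∈ ℤ₂^{*∞}` associated to a multi-index. -/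
def aWord {k : ℕ} (i : Fin k → ℕ) : FreeZ2 := (List.ofFn fun x => gen (i x)).prod

/-- The word `a_i = a_{i₁} ⋯ a_{i_k} ∈ ℤ₂^{*n}` associated to a multi-index. -/
def aWordn {n k : ℕ} (i : Fin k → Fin n) : FreeZ2n n := (List.ofFn fun x => genn (i x)).prod

/-- The natural embedding `ℤ₂^{*n} → ℤ₂^{*∞}`. -/
def incl (n : ℕ) : FreeZ2n n →* FreeZ2 :=
  Monoid.CoprodI.lift (fun i => Monoid.CoprodI.of (M := fun _ : ℕ => Z2) (i := (i : ℕ)))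

/-- The endomorphism of `ℤ₂^{*∞}` induced by a map `σ : ℕ → ℕ`, `a_i ↦ a_{σ i}`.
For bijective `σ` this is the action of `S_∞`, in general that of `sS_∞`. -/
def permEndo (σ : ℕ → ℕ) : FreeZ2 →* FreeZ2 :=
  Monoid.CoprodI.lift (fun i => Monoid.CoprodI.of (M := fun _ : ℕ => Z2) (i := σ i))

/-- The endomorphism of `ℤ₂^{*n}` induced by a map `σ : Fin n → Fin n`. -/
def permEndon {n : ℕ} (σ : Fin n → Fin n) : FreeZ2n n →* FreeZ2n n :=
  Monoid.CoprodI.lift (fun i => Monoid.CoprodI.of (M := fun _ : Fin n => Z2) (i := σ i))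

/-- A map `ℕ → ℕ` is finitely supported (moves only finitely many points). -/
def FinitelySupported (σ : ℕ → ℕ) : Prop := {x | σ x ≠ x}.Finite

/-- `F_∞(D) = S_∞({a_{ind(p)} : p ∈ D(k,0)})`, the set of all words `a_i` with
`ker(i) ∈ D(k,0)` (the `S_∞`-orbit of the words of minimal-index labellings). -/
def Finfty (D : ∀ k l : ℕ, Set (Part k l)) : Set FreeZ2 :=
  { g | ∃ (k : ℕ) (i : Fin k → ℕ), kerPart0 i ∈ D k 0 ∧ g = aWord i }

end GTQG
namespace GTQG

/-! ## The maps `T̂_p` and `T_p` -/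

/-- `(ℂ^n)^{⊗k}`, realised as functions on multi-indices (the standard basis
`e_{i₁} ⊗ ⋯ ⊗ e_{i_k}` is indexed by multi-indices `i ∈ {1,…,n}^k`). -/
abbrev MV (n k : ℕ) : Type := (Fin k → Fin n) → ℂ

/-- `δ̂_p(i,j) = 1` iff `(i,j) ∈ S_∞(ind(p))`, i.e. iff `ker(i,j) = p`. -/
def hatDelta {k l : ℕ} (p : Part k l) {n : ℕ} (i : Fin k → Fin n) (j : Fin l → Fin n) : ℂ :=
  if kerPartA i j = p then 1 else 0

/-- `δ_p(i,j) = 1` iff `(i,j) ∈ sS_∞(ind(p))`, i.e. iff the labelling `(i,j)`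
is constant on the blocks of `p`. -/
def softDelta {k l : ℕ} (p : Part k l) {n : ℕ} (i : Fin k → Fin n) (j : Fin l → Fin n) : ℂ :=
  if p ≤ kerPartA i j then 1 else 0

/-- The linear map `T̂_p^(n) : (ℂ^n)^{⊗k} → (ℂ^n)^{⊗l}`. -/
def hatT (n : ℕ) {k l : ℕ} (p : Part k l) : MV n k →ₗ[ℂ] MV n l :=
  Matrix.mulVecLin (Matrix.of fun (j : Fin l → Fin n) (i : Fin k → Fin n) => hatDelta p i j)

/-- The linear map `T_p^(n) : (ℂ^n)^{⊗k} → (ℂ^n)^{⊗l}` of Banica–Speicher. -/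
def softT (n : ℕ) {k l : ℕ} (p : Part k l) : MV n k →ₗ[ℂ] MV n l :=
  Matrix.mulVecLin (Matrix.of fun (j : Fin l → Fin n) (i : Fin k → Fin n) => softDelta p i j)

/-- The tensor product of linear maps, under the identification
`(ℂ^n)^{⊗k} ⊗ (ℂ^n)^{⊗k'} ≅ (ℂ^n)^{⊗(k+k')}` of basis vectors
`(e_{i} ⊗ e_{f} ↦ e_{if}`, concatenation of multi-indices). -/
def tensorMap {n k l k' l' : ℕ} (S : MV n k →ₗ[ℂ] MV n l) (T : MV n k' →ₗ[ℂ] MV n l') :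
    MV n (k + k') →ₗ[ℂ] MV n (l + l') :=
  Matrix.mulVecLin (Matrix.of fun (x : Fin (l + l') → Fin n) (y : Fin (k + k') → Fin n) =>
    LinearMap.toMatrix' S (fun a => x (Fin.castAdd l' a)) (fun a => y (Fin.castAdd k' a)) *
    LinearMap.toMatrix' T (fun b => x (Fin.natAdd l b)) (fun b => y (Fin.natAdd k b)))

/-- The adjoint of a linear map `(ℂ^n)^{⊗k} → (ℂ^n)^{⊗l}` with respect to the
standard Hermitian inner products (conjugate-transpose of the matrix in the
standard bases). -/
def adjointMap {n k l : ℕ} (S : MV n k →ₗ[ℂ] MV n l) : MV n l →ₗ[ℂ] MV n k :=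
  Matrix.mulVecLin (LinearMap.toMatrix' S).conjTranspose

/-- The map `ζ : ℂ → (ℂ^n)^{⊗2}`, `1 ↦ Σᵢ eᵢ ⊗ eᵢ`. -/
def zetaMap (n : ℕ) : MV n 0 →ₗ[ℂ] MV n 2 :=
  Matrix.mulVecLin (Matrix.of fun (j : Fin 2 → Fin n) (_ : Fin 0 → Fin n) =>
    if j 0 = j 1 then (1 : ℂ) else 0)

/-- A tensor category with duals (of subspaces of `Hom((ℂ^n)^{⊗k}, (ℂ^n)^{⊗l})`). -/
structure IsTensorCategoryWithDuals (n : ℕ)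
    (H : ∀ k l : ℕ, Submodule ℂ (MV n k →ₗ[ℂ] MV n l)) : Prop where
  tensor_mem : ∀ {k l k' l' : ℕ} (S : MV n k →ₗ[ℂ] MV n l) (T : MV n k' →ₗ[ℂ] MV n l'),
      S ∈ H k l → T ∈ H k' l' → tensorMap S T ∈ H (k + k') (l + l')
  comp_mem : ∀ {k l l' : ℕ} (S : MV n k →ₗ[ℂ] MV n l) (T : MV n l →ₗ[ℂ] MV n l'),
      S ∈ H k l → T ∈ H l l' → T ∘ₗ S ∈ H k l'
  adjoint_mem : ∀ {k l : ℕ} (S : MV n k →ₗ[ℂ] MV n l), S ∈ H k l → adjointMap S ∈ H l k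
  id_mem : LinearMap.id ∈ H 1 1
  zeta_mem : zetaMap n ∈ H 0 2

/-- The collection of subspaces `span{T̂_p^(n) : p ∈ R(k,l)}`. -/
def spanOf (n : ℕ) (R : ∀ k l : ℕ, Set (Part k l)) :
    ∀ k l : ℕ, Submodule ℂ (MV n k →ₗ[ℂ] MV n l) :=
  fun k l => Submodule.span ℂ {T | ∃ p ∈ R k l, T = hatT n p}

/-- All connected tensor products of `p` and `q`. -/
def connTensorSet {k l k' l' : ℕ} (p : Part k l) (q : Part k' l') :
    Set (Part (k + k') (l + l')) :=
  { r | ∃ (i : Fin k → ℕ) (j : Fin l → ℕ) (f : Fin k' → ℕ) (g : Fin l' → ℕ),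
      kerPart i j = p ∧ kerPart f g = q ∧ r = kerPart (Fin.append i f) (Fin.append j g) }

/-- All connected conditioned compositions of `p` and `q`. -/
def connCompSet {k l l' : ℕ} (p : Part k l) (q : Part l l') : Set (Part k l') :=
  { r | ∃ (i : Fin k → ℕ) (h : Fin l → ℕ) (g : Fin l' → ℕ),
      kerPart i h = p ∧ kerPart h g = q ∧ r = kerPart i g }

end GTQG
namespace GTQG

/-- `(ℂ^n)^{⊗k}` with its standard Hermitian inner product. -/
abbrev MVE (n k : ℕ) : Type := EuclideanSpace ℂ (Fin k → Fin n)

/-- The canonical identification of `(ℂ^n)^{⊗k}` with its Euclidean version. -/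
def toEuc (n k : ℕ) : MV n k ≃ₗ[ℂ] MVE n k :=
  (WithLp.linearEquiv 2 ℂ ((Fin k → Fin n) → ℂ)).symm

/-- `T̂_p^(n)`, viewed as a map between inner product spaces. -/
def hatTE (n : ℕ) {k l : ℕ} (p : Part k l) : MVE n k →ₗ[ℂ] MVE n l :=
  (toEuc n l).toLinearMap ∘ₗ hatT n p ∘ₗ (toEuc n k).symm.toLinearMap

lemma invol_invol {k l : ℕ} (p : Part k l) : invol (invol p) = p := by
  ext x y
  show p x.swap.swap y.swap.swap ↔ p x y
  rw [Sum.swap_swap, Sum.swap_swap]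

lemma invol_injective {k l : ℕ} : Function.Injective (invol : Part k l → Part l k) :=
  Function.LeftInverse.injective invol_invol

lemma invol_kerPartA {α : Type*} {k l : ℕ} (i : Fin k → α) (j : Fin l → α) :
    invol (kerPartA i j) = kerPartA j i := by
  ext x y
  cases x <;> cases y <;> rfl

lemma hatDelta_invol {k l n : ℕ} (p : Part k l) (i : Fin k → Fin n) (j : Fin l → Fin n) :
    hatDelta (invol p) j i = hatDelta p i j := by
  simp only [hatDelta, ← invol_kerPartA i j, invol_injective.eq_iff]

lemma star_hatDelta {k l n : ℕ} (p : Part k l) (i : Fin k → Fin n) (j : Fin l → Fin n) :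
    star (hatDelta p i j) = hatDelta p i j := by
  unfold hatDelta
  split_ifs <;> simp

def hatMatrix (n : ℕ) {k l : ℕ} (p : Part k l) : Matrix (Fin l → Fin n) (Fin k → Fin n) ℂ :=
  Matrix.of fun j i => hatDelta p i j

lemma conjTranspose_hatMatrix (n : ℕ) {k l : ℕ} (p : Part k l) :
    (hatMatrix n p).conjTranspose = hatMatrix n (invol p) := by
  ext i j
  simp only [hatMatrix, Matrix.conjTranspose_apply, Matrix.of_apply, star_hatDelta,
    hatDelta_invol]

lemma hatTE_eq_toEuclideanLin (n : ℕ) {k l : ℕ} (p : Part k l) :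
    hatTE n p = (hatMatrix n p).toEuclideanLin :=
  rfl

theorem hatT_adjoint_general (n : ℕ) {k l : ℕ} (p : Part k l) :
    LinearMap.adjoint (hatTE n p) = hatTE n (invol p) := by
  rw [hatTE_eq_toEuclideanLin, ← Matrix.toEuclideanLin_conjTranspose_eq_adjoint,
    conjTranspose_hatMatrix, hatTE_eq_toEuclideanLin]

/-- The adjoint of `T̂_p^(n)` with respect to the standard
Hermitian inner products is `T̂_{p*}^(n)`. -/
theorem hatT_adjoint (n : ℕ) (hn : 0 < n) {k l : ℕ} (p : Part k l) :
    LinearMap.adjoint (hatTE n p) = hatTE n (invol p) :=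
  hatT_adjoint_general n p

end GTQG
end
end

section
/- Let n ∈ ℕ, p ∈ P(k,l), q ∈ P(k',l'), and let L := {p ⊗_{(if,jg)} q : (i,j) ∈ S_∞(ind(p)), (f,g) ∈ S_∞(ind(q))} be the set of all connected tensor products of p and q. Then T̂_p^(n) ⊗ T̂_q^(n) = Σ_{r ∈ L} T̂_r^(n) as linear maps (ℂ^n)^{⊗(k+k')} → (ℂ^n)^{⊗(l+l')}. -/
attribute [local instance] Classical.propDecidable

noncomputable section

namespace GTQG


/-! ### Auxiliary lemmas for Statement 9 -/

lemma kerPartA_comp_inj {α β : Type*} {k l : ℕ} {v : α → β} (hv : Function.Injective v)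
    (i : Fin k → α) (j : Fin l → α) : kerPartA (v ∘ i) (v ∘ j) = kerPartA i j := by
  have he : Sum.elim (v ∘ i) (v ∘ j) = v ∘ Sum.elim i j := by funext x; cases x <;> rfl
  apply Setoid.ext; intro a b
  show Setoid.ker _ a b ↔ Setoid.ker _ a b
  rw [Setoid.ker_def, Setoid.ker_def, he]
  exact ⟨fun h => hv h, fun h => congrArg v h⟩

lemma kerPartA_restrict {α : Type*} {K L k l : ℕ} (u : Fin k → Fin K) (w : Fin l → Fin L)
    (y : Fin K → α) (x : Fin L → α) :
    kerPartA (y ∘ u) (x ∘ w) = Setoid.comap (Sum.map u w) (kerPartA y x) := by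
  apply Setoid.ext; intro a b
  rw [Setoid.comap_rel]
  show Setoid.ker _ a b ↔ Setoid.ker _ _ _
  rw [Setoid.ker_def, Setoid.ker_def]
  cases a <;> cases b <;> rfl

instance instFinitePart (k l : ℕ) : Finite (Part k l) :=
  Finite.of_injective (fun s : Part k l => s.r) fun _ _ h =>
    Setoid.ext fun a b => iff_of_eq (congrFun (congrFun h a) b)

lemma mem_connTensorSet_iff {n k l k' l' : ℕ} (p : Part k l) (q : Part k' l')
    (y : Fin (k + k') → Fin n) (x : Fin (l + l') → Fin n) :
    kerPartA y x ∈ connTensorSet p q ↔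
      (kerPartA (fun a => y (Fin.castAdd k' a)) (fun a => x (Fin.castAdd l' a)) = p ∧
       kerPartA (fun a => y (Fin.natAdd k a)) (fun a => x (Fin.natAdd l a)) = q) := by
  constructor
  · rintro ⟨i, j, f, g, hp, hq, hr⟩
    have h1 := congrArg (Setoid.comap (Sum.map (Fin.castAdd k') (Fin.castAdd l'))) hr
    have h2 := congrArg (Setoid.comap (Sum.map (Fin.natAdd k) (Fin.natAdd l))) hr
    rw [← kerPartA_restrict, ← kerPartA_restrict] at h1
    rw [← kerPartA_restrict, ← kerPartA_restrict] at h2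
    have e1 : (Fin.append i f ∘ Fin.castAdd k') = i := by
      funext a; simp [Fin.append_left]
    have e2 : (Fin.append j g ∘ Fin.castAdd l') = j := by
      funext a; simp [Fin.append_left]
    have e3 : (Fin.append i f ∘ Fin.natAdd k) = f := by
      funext a; simp [Fin.append_right]
    have e4 : (Fin.append j g ∘ Fin.natAdd l) = g := by
      funext a; simp [Fin.append_right]
    rw [e1, e2] at h1
    rw [e3, e4] at h2
    exact ⟨h1.trans hp, h2.trans hq⟩
  · rintro ⟨hp, hq⟩
    refine ⟨Fin.val ∘ y ∘ Fin.castAdd k', Fin.val ∘ x ∘ Fin.castAdd l',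
      Fin.val ∘ y ∘ Fin.natAdd k, Fin.val ∘ x ∘ Fin.natAdd l, ?_, ?_, ?_⟩
    · exact (kerPartA_comp_inj Fin.val_injective _ _).trans hp
    · exact (kerPartA_comp_inj Fin.val_injective _ _).trans hq
    · have ey : Fin.append (Fin.val ∘ y ∘ Fin.castAdd k') (Fin.val ∘ y ∘ Fin.natAdd k)
          = Fin.val ∘ y := by
        funext z
        refine Fin.addCases (fun a => ?_) (fun b => ?_) z
        · simp [Fin.append_left]
        · simp [Fin.append_right]
      have ex : Fin.append (Fin.val ∘ x ∘ Fin.castAdd l') (Fin.val ∘ x ∘ Fin.natAdd l)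
          = Fin.val ∘ x := by
        funext z
        refine Fin.addCases (fun a => ?_) (fun b => ?_) z
        · simp [Fin.append_left]
        · simp [Fin.append_right]
      rw [ey, ex]
      exact (kerPartA_comp_inj Fin.val_injective _ _).symm

/-- The tensor product of `T̂_p^(n)` and `T̂_q^(n)` is the sum
of the maps `T̂_r^(n)` over all connected tensor products `r` of `p` and `q`. -/
theorem hatT_tensor (n : ℕ) (hn : 0 < n) {k l k' l' : ℕ}
    (p : Part k l) (q : Part k' l') :
    tensorMap (hatT n p) (hatT n q) = ∑ᶠ r ∈ connTensorSet p q, hatT n r := by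
  classical
  have hfin : (connTensorSet p q).Finite := Set.toFinite _
  rw [← Set.Finite.coe_toFinset hfin, finsum_mem_coe_finset]
  apply LinearMap.toMatrix'.injective
  rw [map_sum]
  have hm : ∀ (a b : ℕ) (M : Matrix (Fin b → Fin n) (Fin a → Fin n) ℂ),
      LinearMap.toMatrix' (Matrix.mulVecLin M) = M := fun a b M =>
    LinearMap.toMatrix'_toLin' M
  ext x y
  simp only [tensorMap, hatT, hm, Matrix.of_apply, hatDelta, Matrix.sum_apply]
  rw [Finset.sum_ite_eq]
  simp only [Set.Finite.mem_toFinset, mem_connTensorSet_iff]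
  by_cases hA : kerPartA (fun a => y (Fin.castAdd k' a)) (fun a => x (Fin.castAdd l' a)) = p <;>
    by_cases hB : kerPartA (fun a => y (Fin.natAdd k a)) (fun a => x (Fin.natAdd l a)) = q <;>
      simp [hA, hB]

end GTQG
end
end

section
/- For all n ∈ ℕ and k,l ∈ ℕ₀, the family of linear maps {T̂_p^(n) : p ∈ P(k,l), p has at most n blocks} is linearly independent in Hom((ℂ^n)^{⊗k}, (ℂ^n)^{⊗l}). -/
attribute [local instance] Classical.propDecidable

noncomputable section

namespace GTQG

/-- Any partition with at most `n` blocks is realizable as the kernel of a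
labelling with values in `Fin n`. -/
lemma exists_kerPartA_eq {k l n : ℕ} (p : Part k l) (h : blockCount p ≤ n) :
    ∃ (i : Fin k → Fin n) (j : Fin l → Fin n), kerPartA i j = p := by
  classical
  have : Fintype (Quotient p) := Fintype.ofFinite _
  have hcard : Fintype.card (Quotient p) ≤ Fintype.card (Fin n) := by
    rw [← Nat.card_eq_fintype_card, Fintype.card_fin]; exact h
  obtain ⟨f⟩ := Function.Embedding.nonempty_of_card_le hcard
  refine ⟨fun x => f ⟦Sum.inl x⟧, fun y => f ⟦Sum.inr y⟧, ?_⟩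
  apply Setoid.ext
  intro a b
  have ha : Sum.elim (fun x => f ⟦Sum.inl x⟧) (fun y => f ⟦Sum.inr y⟧) a = f ⟦a⟧ := by
    cases a <;> rfl
  have hb : Sum.elim (fun x => f ⟦Sum.inl x⟧) (fun y => f ⟦Sum.inr y⟧) b = f ⟦b⟧ := by
    cases b <;> rfl
  show Sum.elim _ _ a = Sum.elim _ _ b ↔ _
  rw [ha, hb, f.apply_eq_iff_eq, Quotient.eq]

/-- The maps `T̂_p^(n)`, for `p ∈ P(k,l)` with at most `n`
blocks, are linearly independent. -/
theorem hatT_linearIndependent (n : ℕ) (hn : 0 < n) (k l : ℕ) :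
    LinearIndependent ℂ
      (fun p : {p : Part k l // blockCount p ≤ n} => hatT n (p : Part k l)) := by
  classical
  rw [linearIndependent_iff']
  intro s g hg p hp
  obtain ⟨i, j, hij⟩ := exists_kerPartA_eq (n := n) p.1 p.2
  have h0 := LinearMap.congr_fun hg (Pi.single i 1)
  simp only [LinearMap.coe_sum, Finset.sum_apply, LinearMap.smul_apply,
    LinearMap.zero_apply] at h0
  have h1 := congrFun h0 j
  simp only [Finset.sum_apply, Pi.smul_apply, Pi.zero_apply, smul_eq_mul] at h1
  have hval : ∀ q : {p : Part k l // blockCount p ≤ n},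
      hatT n (q : Part k l) (Pi.single i 1) j = hatDelta q.1 i j := by
    intro q
    simp [hatT, Matrix.mulVecLin_apply, Matrix.mulVec_single]
  simp only [hval] at h1
  rw [Finset.sum_eq_single p] at h1
  · simpa [hatDelta, hij] using h1
  · intro q hq hqp
    have hne : kerPartA i j ≠ q.1 := by
      rw [hij]
      exact fun h => hqp (Subtype.ext h.symm)
    simp [hatDelta, hne]
  · intro h; exact absurd hp h

end GTQG
end
end

section
/- Let A be a unital C*-algebra, n ∈ ℕ, and let u_{ij} ∈ A (1 ≤ i,j ≤ n) satisfy: u_{ij}* = u_{ij} for all i,j; each u_{ij}² is a projection lying in the center of A; and Σ_{j=1}^n u_{ij}² = 1 and Σ_{i=1}^n u_{ij}² = 1 for all i,j. Then u_{ij}³ = u_{ij} for all i,j, and u_{ij} u_{ik} = 0 and u_{ji} u_{ki} = 0 whenever j ≠ k. Consequently, for all multi-indices (i₁,…,i_k), (j₁,…,j_k) ∈ {1,…,n}^k such that i_x = i_y and j_x ≠ j_y for some x,y ∈ {1,…,k}, one has u_{i₁j₁} ⋯ u_{i_kj_k} = 0. -/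
attribute [local instance] Classical.propDecidable

noncomputable section

namespace GTQG

/-- Commuting central self-adjoint idempotents summing to `1` are
pairwise orthogonal. -/
private lemma orth_aux {A : Type*} [CStarAlgebra A] {n : ℕ} (p : Fin n → A)
    (hsa : ∀ m, IsSelfAdjoint (p m)) (hid : ∀ m, IsIdempotentElem (p m))
    (hsum : ∑ m, p m = 1)
    {j k : Fin n} (hjk : j ≠ k) (hc : ∀ a, a * p j = p j * a) :
    p j * p k = 0 := by
  letI := CStarAlgebra.spectralOrder A
  letI := CStarAlgebra.spectralOrderedRing A
  have hnn : ∀ m, (0 : A) ≤ p m := fun m => by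
    have h : p m = star (p m) * p m := by rw [hsa m]; exact (hid m).symm
    rw [h]; exact star_mul_self_nonneg _
  have hsum1 : ∑ m ∈ Finset.univ.erase j, p m = 1 - p j := by
    rw [eq_sub_iff_add_eq, Finset.sum_erase_add _ _ (Finset.mem_univ j), hsum]
  have hsum2 : ∑ m ∈ (Finset.univ.erase j).erase k, p m = (1 - p j) - p k := by
    rw [eq_sub_iff_add_eq,
      Finset.sum_erase_add _ _ (Finset.mem_erase.mpr ⟨hjk.symm, Finset.mem_univ k⟩), hsum1]
  have hle : p k ≤ 1 - p j := by
    have h0 : (0 : A) ≤ (1 - p j) - p k := by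
      rw [← hsum2]; exact Finset.sum_nonneg fun m _ => hnn m
    exact sub_nonneg.mp h0
  have key : star (p j) * p k * p j ≤ star (p j) * (1 - p j) * p j :=
    star_left_conjugate_le_conjugate hle (p j)
  have hL : star (p j) * p k * p j = p j * p k := by
    rw [hsa j, mul_assoc, hc (p k), ← mul_assoc, hid j]
  have hR : star (p j) * (1 - p j) * p j = 0 := by
    rw [hsa j, mul_sub, mul_one, hid j, sub_self, zero_mul]
  have hupper : p j * p k ≤ 0 := by rw [← hL, ← hR]; exact key
  have hnnq : (0 : A) ≤ p j * p k := by
    have hsq : (p j * p k) * (p j * p k) = p j * p k := by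
      have h1 : (p j * p k) * (p j * p k) = p j * (p k * p j) * p k := by
        simp [mul_assoc]
      rw [h1, hc (p k)]
      have h2 : p j * (p j * p k) * p k = (p j * p j) * (p k * p k) := by
        simp [mul_assoc]
      rw [h2, hid j, hid k]
    have hq : p j * p k = star (p j * p k) * (p j * p k) := by
      rw [star_mul, hsa j, hsa k, hc (p k), hsq]
    rw [hq]; exact star_mul_self_nonneg _
  exact le_antisymm hupper hnnq

/-- A central factor occurring (as a left divisor of an entry) in a list
product can be pulled out to the front. -/
private lemma pull_aux {A : Type*} [Monoid A] (L : List A) (c : A)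
    (hc : ∀ a, a * c = c * a) (i : ℕ) (hi : i < L.length)
    (h : L[i] = c * L[i]) : L.prod = c * L.prod := by
  conv_lhs => rw [← List.take_append_drop i L, List.prod_append,
    List.drop_eq_getElem_cons hi, List.prod_cons, h]
  conv_rhs => rw [← List.take_append_drop i L, List.prod_append,
    List.drop_eq_getElem_cons hi, List.prod_cons]
  simp only [← mul_assoc]
  rw [hc]

/-- In a unital C*-algebra, if the `u_{ij}` are self-adjoint,
the `u_{ij}²` are central projections, and the rows and columns of `(u_{ij}²)`
sum to `1`, then `u_{ij}³ = u_{ij}`, products `u_{ij} u_{ik}` and `u_{ji} u_{ki}`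
vanish for `j ≠ k`, and consequently any product `u_{i₁j₁} ⋯ u_{i_kj_k}` with
`i_x = i_y` but `j_x ≠ j_y` for some `x,y` vanishes. -/

theorem groupTheoretical_relations (A : Type*) [CStarAlgebra A] (n : ℕ) (hn : 0 < n)
    (u : Fin n → Fin n → A)
    (hsa : ∀ i j, star (u i j) = u i j)
    (hsaproj : ∀ i j, IsSelfAdjoint ((u i j) ^ 2))
    (hproj : ∀ i j, IsIdempotentElem ((u i j) ^ 2))
    (hcentral : ∀ i j a, a * (u i j) ^ 2 = (u i j) ^ 2 * a)
    (hrow : ∀ i, ∑ j, (u i j) ^ 2 = 1)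
    (hcol : ∀ j, ∑ i, (u i j) ^ 2 = 1) :
    (∀ i j, (u i j) ^ 3 = u i j) ∧
    (∀ i j k, j ≠ k → u i j * u i k = 0 ∧ u j i * u k i = 0) ∧
    (∀ (m : ℕ) (I J : Fin m → Fin n) (x y : Fin m), I x = I y → J x ≠ J y →
      (List.ofFn fun t => u (I t) (J t)).prod = 0) := by
  classical
  -- orthogonality of the central projections, by row and by column
  have horthrow : ∀ i j k, j ≠ k → (u i j) ^ 2 * (u i k) ^ 2 = 0 := fun i j k h =>
    orth_aux (fun m => (u i m) ^ 2) (fun m => hsaproj i m) (fun m => hproj i m)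
      (hrow i) h (hcentral i j)
  have horthcol : ∀ i j k, j ≠ k → (u j i) ^ 2 * (u k i) ^ 2 = 0 := fun i j k h =>
    orth_aux (fun m => (u m i) ^ 2) (fun m => hsaproj m i) (fun m => hproj m i)
      (hcol i) h (hcentral j i)
  -- vanishing of products within a row
  have hzrow : ∀ i j k, j ≠ k → u i j * u i k = 0 := by
    intro i j k h
    apply (CStarRing.star_mul_self_eq_zero_iff _).mp
    have e : star (u i j * u i k) * (u i j * u i k) = (u i j) ^ 2 * (u i k) ^ 2 := by
      rw [star_mul, hsa, hsa]
      have h1 : u i k * u i j * (u i j * u i k) = (u i k * (u i j) ^ 2) * u i k := by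
        rw [sq, mul_assoc, mul_assoc, mul_assoc]
      rw [h1, hcentral i j (u i k), mul_assoc, ← sq]
    rw [e]; exact horthrow i j k h
  have hzcol : ∀ i j k, j ≠ k → u j i * u k i = 0 := by
    intro i j k h
    apply (CStarRing.star_mul_self_eq_zero_iff _).mp
    have e : star (u j i * u k i) * (u j i * u k i) = (u j i) ^ 2 * (u k i) ^ 2 := by
      rw [star_mul, hsa, hsa]
      have h1 : u k i * u j i * (u j i * u k i) = (u k i * (u j i) ^ 2) * u k i := by
        rw [sq, mul_assoc, mul_assoc, mul_assoc]
      rw [h1, hcentral j i (u k i), mul_assoc, ← sq]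
    rw [e]; exact horthcol i j k h
  -- cubes
  have hcube : ∀ i j, (u i j) ^ 3 = u i j := by
    intro i j
    have hz : ∀ b ∈ Finset.univ, b ≠ j → u i j * (u i b) ^ 2 = 0 := by
      intro b _ hb
      rw [sq, ← mul_assoc, hzrow i j b (Ne.symm hb), zero_mul]
    calc (u i j) ^ 3 = u i j * (u i j) ^ 2 := by rw [pow_succ, sq, mul_assoc]
      _ = ∑ b, u i j * (u i b) ^ 2 := (Finset.sum_eq_single_of_mem j (Finset.mem_univ j) hz).symm
      _ = u i j * ∑ b, (u i b) ^ 2 := by rw [Finset.mul_sum]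
      _ = u i j := by rw [hrow i, mul_one]
  refine ⟨hcube, fun i j k h => ⟨hzrow i j k h, hzcol i j k h⟩, ?_⟩
  intro m I J x y hI hJ
  set f : Fin m → A := fun t => u (I t) (J t) with hf
  set L : List A := List.ofFn f with hLdef
  have hlen : L.length = m := by rw [hLdef, List.length_ofFn]
  have hget : ∀ t : Fin m, L[(t : ℕ)]'(by rw [hlen]; exact t.isLt) = f t := by
    intro t
    simp only [hLdef, List.getElem_ofFn, Fin.eta]
  have hdiv : ∀ t : Fin m, f t = (u (I t) (J t)) ^ 2 * f t := by
    intro t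
    show u (I t) (J t) = (u (I t) (J t)) ^ 2 * u (I t) (J t)
    conv_lhs => rw [← hcube (I t) (J t)]
    rw [pow_succ]
  have e1 : L.prod = (u (I x) (J x)) ^ 2 * L.prod :=
    pull_aux L _ (hcentral (I x) (J x)) (x : ℕ) (by rw [hlen]; exact x.isLt)
      (by rw [hget x]; exact hdiv x)
  have e2 : L.prod = (u (I y) (J y)) ^ 2 * L.prod :=
    pull_aux L _ (hcentral (I y) (J y)) (y : ℕ) (by rw [hlen]; exact y.isLt)
      (by rw [hget y]; exact hdiv y)
  have horth : (u (I x) (J x)) ^ 2 * (u (I y) (J y)) ^ 2 = 0 := by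
    rw [← hI]; exact horthrow (I x) (J x) (J y) hJ
  show L.prod = 0
  conv_lhs => rw [e1]
  conv_lhs => rw [e2]
  rw [← mul_assoc, horth, zero_mul]


end GTQG
end
end

section
/- Let A be a unital C*-algebra, n ∈ ℕ, and let u_{ij} ∈ A (1 ≤ i,j ≤ n) satisfy u_{ij}* = u_{ij}, each u_{ij}² a central projection, and Σ_{j=1}^n u_{ij}² = 1 = Σ_{i=1}^n u_{ij}² for all i,j. Let p ∈ P(k,0). Then the intertwining relations of T̂_p^(n), namely Σ_{f ∈ {1,…,n}^k} δ̂_p(f) · u_{f₁i₁} ⋯ u_{f_ki_k} = δ̂_p(i) · 1 for all i ∈ {1,…,n}^k, hold if and only if p has more than n blocks or Σ_{f ∈ {1,…,n}^k} u_{f₁i₁} ⋯ u_{f_ki_k} = 1 for all i = (i₁,…,i_k) ∈ S_n(ind(p)). -/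
attribute [local instance] Classical.propDecidable

noncomputable section

namespace GTQG

/-! The squares `u_{ij}²` are central projections summing to `1` along every row and column, hence
orthogonal within a row and within a column, and `u_{ij} u_{ij}² = u_{ij}` (C*-identity), so a
product `u_{f₁i₁} ⋯ u_{f_ki_k}` absorbs the square of each of its factors. If `ker f ≠ ker i`, two
factors share a row or a column and have orthogonal squares, so the product vanishes. Hence the
sum over `ker f = p` is the full sum when `ker i = p` and `0` otherwise; and no `i ∈ {1,…,n}^k`
has a kernel with more than `n` blocks. -/

open Finset

theorem _root_.IsSelfAdjoint.mul_sq_eq_self_of_isIdempotentElem {A : Type*} [NormedRing A]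
    [StarRing A] [CStarRing A] {x : A} (hx : IsSelfAdjoint x)
    (hidem : IsIdempotentElem (x ^ 2)) : x * x ^ 2 = x := by
  rw [← pow_succ']
  have h4 : x ^ 4 = x ^ 2 := by rw [show 4 = 2 + 2 from rfl, pow_add, hidem.eq]
  have h6 : x ^ 6 = x ^ 2 := by rw [show 6 = 4 + 2 from rfl, pow_add, h4, hidem.eq]
  have hzero : star (x ^ 3 - x) * (x ^ 3 - x) = 0 := by
    rw [((hx.pow 3).sub hx).star_eq,
      show (x ^ 3 - x) * (x ^ 3 - x) = x ^ 6 - x ^ 4 - x ^ 4 + x ^ 2 by noncomm_ring, h6, h4]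
    abel
  exact sub_eq_zero.mp ((CStarRing.star_mul_self_eq_zero_iff _).mp hzero)

theorem _root_.IsStarProjection.mul_eq_zero_of_sum_eq_one {A ι : Type*} [NormedRing A]
    [StarRing A] [CStarRing A] [PartialOrder A] [StarOrderedRing A] [Fintype ι]
    {e : ι → A} (he : ∀ c, IsStarProjection (e c)) (hsum : ∑ c, e c = 1) {a b : ι}
    (hab : a ≠ b) : e a * e b = 0 := by
  classical
  have hconj : ∀ c, star (e c * e b) * (e c * e b) = e b * e c * e b := fun c => by
    rw [star_mul, (he b).isSelfAdjoint.star_eq, (he c).isSelfAdjoint.star_eq, mul_assoc,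
      ← mul_assoc (e c), (he c).isIdempotentElem.eq, mul_assoc]
  -- `e b * (∑_{c ≠ b} e c) * e b = e b * (1 - e b) * e b = 0`, a sum of positive elements
  have hzero : ∑ c ∈ univ.erase b, star (e c * e b) * (e c * e b) = 0 := by
    simp_rw [hconj, ← sum_mul, ← mul_sum, sum_erase_eq_sub (mem_univ b), hsum,
      (he b).mul_one_sub_self, zero_mul]
  have := (sum_eq_zero_iff_of_nonneg fun c _ => star_mul_self_nonneg _).mp hzero a
    (mem_erase.mpr ⟨hab, mem_univ a⟩)
  exact (CStarRing.star_mul_self_eq_zero_iff _).mp this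

theorem _root_.List.prod_mul_eq_self_of_mem {M : Type*} [Monoid M] {L : List M} {x e : M}
    (hx : x ∈ L) (hxe : x * e = x) (he : ∀ a ∈ L, Commute a e) : L.prod * e = L.prod := by
  induction L with
  | nil => simp at hx
  | cons a L ih =>
    rw [List.prod_cons, mul_assoc]
    rcases List.mem_cons.mp hx with rfl | hx
    · rw [(Commute.list_prod_left _ _ fun b hb => he b (List.mem_cons_of_mem x hb)).eq,
        ← mul_assoc, hxe]
    · rw [ih hx fun b hb => he b (List.mem_cons_of_mem a hb)]

theorem _root_.Fintype.sum_ite_eq_ite_sum_of_eq_zero {ι K M : Type*} [Fintype ι]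
    [AddCommMonoid M] [DecidableEq K] (κ : ι → K) (g : ι → M) {c : K}
    (hg : ∀ x, κ x ≠ c → g x = 0) (q : K) :
    (∑ x, if κ x = q then g x else 0) = if c = q then ∑ x, g x else 0 := by
  split_ifs with hcq
  · subst hcq
    refine sum_congr rfl fun x _ => ?_
    split_ifs with hx
    · rfl
    · exact (hg x hx).symm
  · refine sum_eq_zero fun x _ => ?_
    split_ifs with hx
    · exact hg x (hx ▸ hcq ∘ Eq.symm)
    · rfl

theorem kerPartA_eq_kerPartA_iff_ker_eq {α β : Type*} {k : ℕ} (f : Fin k → α) (i : Fin k → β)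
    (j : Fin 0 → α) (j' : Fin 0 → β) :
    kerPartA f j = kerPartA i j' ↔ Setoid.ker f = Setoid.ker i := by
  simp only [kerPartA, Setoid.ext_iff, Setoid.ker_def, Sum.forall, Sum.elim_inl,
    IsEmpty.forall_iff, and_true]

theorem blockCount_kerPartA_le {α : Type*} [Finite α] {k l : ℕ} (i : Fin k → α)
    (j : Fin l → α) : blockCount (kerPartA i j) ≤ Nat.card α :=
  (Nat.card_congr (Setoid.quotientKerEquivRange _)).trans_le
    (Nat.card_le_card_of_injective _ Subtype.val_injective)

theorem prod_ofFn_eq_zero_of_ker_ne {A ι κ : Type*} [NormedRing A] [StarRing A] [CStarRing A]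
    [PartialOrder A] [StarOrderedRing A] [Fintype ι] [Fintype κ] (u : ι → κ → A)
    (hsa : ∀ i j, IsSelfAdjoint (u i j)) (hproj : ∀ i j, IsIdempotentElem (u i j ^ 2))
    (hcentral : ∀ i j a, Commute a (u i j ^ 2))
    (hrow : ∀ i, ∑ j, u i j ^ 2 = 1) (hcol : ∀ j, ∑ i, u i j ^ 2 = 1) {k : ℕ}
    {f : Fin k → ι} {i : Fin k → κ} (hne : Setoid.ker f ≠ Setoid.ker i) :
    (List.ofFn fun t => u (f t) (i t)).prod = 0 := by
  have hsp : ∀ a b, IsStarProjection (u a b ^ 2) := fun a b => ⟨hproj a b, (hsa a b).pow 2⟩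
  obtain ⟨s, t, hst⟩ : ∃ s t, ¬(f s = f t ↔ i s = i t) := by
    simpa only [Ne, Setoid.ext_iff, Setoid.ker_def, not_forall] using hne
  have habsorb : ∀ r, (List.ofFn fun t => u (f t) (i t)).prod * u (f r) (i r) ^ 2 =
      (List.ofFn fun t => u (f t) (i t)).prod := fun r =>
    List.prod_mul_eq_self_of_mem (List.mem_ofFn.mpr ⟨r, rfl⟩)
      ((hsa _ _).mul_sq_eq_self_of_isIdempotentElem (hproj _ _)) fun a _ => hcentral _ _ a
  have horth : u (f s) (i s) ^ 2 * u (f t) (i t) ^ 2 = 0 := by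
    by_cases hf : f s = f t
    · rw [hf]
      exact IsStarProjection.mul_eq_zero_of_sum_eq_one (hsp _) (hrow _) (hst ∘ iff_of_true hf)
    · have hi : i s = i t := by tauto
      rw [hi]
      exact IsStarProjection.mul_eq_zero_of_sum_eq_one (fun a => hsp a _) (hcol _) hf
  rw [← habsorb t, ← habsorb s, mul_assoc, horth, mul_zero]

theorem hatT_intertwines_iff_general (A : Type*) [CStarAlgebra A] (n : ℕ)
    (u : Fin n → Fin n → A)
    (hsa : ∀ i j, star (u i j) = u i j)
    (hproj : ∀ i j, IsIdempotentElem ((u i j) ^ 2))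
    (hcentral : ∀ i j a, a * (u i j) ^ 2 = (u i j) ^ 2 * a)
    (hrow : ∀ i, ∑ j, (u i j) ^ 2 = 1)
    (hcol : ∀ j, ∑ i, (u i j) ^ 2 = 1)
    (k : ℕ) (p : Part k 0) :
    (∀ i : Fin k → Fin n,
        (∑ f : Fin k → Fin n,
          if kerPartA f (fun y : Fin 0 => y.elim0) = p then
            (List.ofFn fun t => u (f t) (i t)).prod else 0)
          = (if kerPartA i (fun y : Fin 0 => y.elim0) = p then (1 : A) else 0)) ↔
      (n < blockCount p ∨
        ∀ i : Fin k → Fin n, kerPartA i (fun y : Fin 0 => y.elim0) = p →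
          (∑ f : Fin k → Fin n, (List.ofFn fun t => u (f t) (i t)).prod) = 1) := by
  let := CStarAlgebra.spectralOrder A
  have := CStarAlgebra.spectralOrderedRing A
  have hsum (i : Fin k → Fin n) := Fintype.sum_ite_eq_ite_sum_of_eq_zero
    (fun f => kerPartA f (fun y : Fin 0 => y.elim0))
    (fun f => (List.ofFn fun t => u (f t) (i t)).prod)
    (c := kerPartA i (fun y : Fin 0 => y.elim0))
    (fun f hf => prod_ofFn_eq_zero_of_ker_ne u hsa hproj hcentral hrow hcol
      (mt (kerPartA_eq_kerPartA_iff_ker_eq f i _ _).mpr hf)) p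
  simp only [hsum]
  have hle (i : Fin k → Fin n) : blockCount (kerPartA i (fun y : Fin 0 => y.elim0)) ≤ n := by
    simpa using blockCount_kerPartA_le i (fun y : Fin 0 => y.elim0)
  constructor
  · exact fun h => Or.inr fun i hi => by simpa [hi] using h i
  · rintro (hlt | h) i <;> split_ifs with hi
    · exact absurd (hi ▸ hle i) hlt.not_ge
    · rfl
    · exact h i hi
    · rfl

/-- With `u_{ij}` as in a group-theoretical quantum group,
the intertwining relations of `T̂_p^(n)` for `p ∈ P(k,0)` hold if and only if
`p` has more than `n` blocks or
`Σ_f u_{f₁i₁} ⋯ u_{f_ki_k} = 1` for all `i ∈ S_n(ind(p))`. -/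
theorem hatT_intertwines_iff (A : Type*) [CStarAlgebra A] (n : ℕ) (hn : 0 < n)
    (u : Fin n → Fin n → A)
    (hsa : ∀ i j, star (u i j) = u i j)
    (hsaproj : ∀ i j, IsSelfAdjoint ((u i j) ^ 2))
    (hproj : ∀ i j, IsIdempotentElem ((u i j) ^ 2))
    (hcentral : ∀ i j a, a * (u i j) ^ 2 = (u i j) ^ 2 * a)
    (hrow : ∀ i, ∑ j, (u i j) ^ 2 = 1)
    (hcol : ∀ j, ∑ i, (u i j) ^ 2 = 1)
    (k : ℕ) (p : Part k 0) :
    (∀ i : Fin k → Fin n,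
        (∑ f : Fin k → Fin n,
          if kerPartA f (fun y : Fin 0 => y.elim0) = p then
            (List.ofFn fun t => u (f t) (i t)).prod else 0)
          = (if kerPartA i (fun y : Fin 0 => y.elim0) = p then (1 : A) else 0)) ↔
      (n < blockCount p ∨
        ∀ i : Fin k → Fin n, kerPartA i (fun y : Fin 0 => y.elim0) = p →
          (∑ f : Fin k → Fin n, (List.ofFn fun t => u (f t) (i t)).prod) = 1) :=
  hatT_intertwines_iff_general A n u hsa hproj hcentral hrow hcol k p

end GTQG
end
end
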